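/- If G is a bipartite graph, then DOM(G) = α(G). -/

import Mathlib

open SimpleGraph

variable {V : Type*}

/-- `D` is an orientation of the simple graph `G`: arcs only along edges, and each edge
gets exactly one of its two possible directions. -/
def IsOrientation (G : SimpleGraph V) (D : V → V → Prop) : Prop :=
  (∀ u v, D u v → G.Adj u v) ∧ (∀ u v, G.Adj u v → (D u v ↔ ¬ D v u))

/-- `S` is a dominating set of the digraph `D`. -/
def IsDomSet (D : V → V → Prop) (S : Finset V) : Prop :=
  ∀ v, v ∉ S → ∃ u ∈ S, D u v

/-- Domination number of a digraph. -/
noncomputable def domNum (D : V → V → Prop) : ℕ :=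
  sInf {n | ∃ S : Finset V, S.card = n ∧ IsDomSet D S}

/-- Orientable domination number of a graph. -/
noncomputable def DOM (G : SimpleGraph V) : ℕ :=
  sSup {n | ∃ D : V → V → Prop, IsOrientation G D ∧ domNum D = n}

/-- Independence number. -/
noncomputable def indepNum (G : SimpleGraph V) : ℕ :=
  sSup {n | ∃ S : Finset V, S.card = n ∧ ∀ u ∈ S, ∀ v ∈ S, ¬ G.Adj u v}

/-- Matching number. -/
noncomputable def matchNum (G : SimpleGraph V) : ℕ :=
  sSup {n | ∃ M : Finset (Sym2 V), M.card = n ∧ (∀ e ∈ M, e ∈ G.edgeSet) ∧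
    ∀ e ∈ M, ∀ f ∈ M, e ≠ f → ∀ v, v ∈ e → v ∉ f}

/-- Maximum order of a bipartite induced subgraph. -/
noncomputable def bipNum (G : SimpleGraph V) : ℕ :=
  sSup {n | ∃ s : Finset V, s.card = n ∧ (G.induce (s : Set V)).Colorable 2}

/-- Join of `G` with a single universal vertex (`none`). -/
def joinK1 (G : SimpleGraph V) : SimpleGraph (Option V) :=
  SimpleGraph.fromRel (fun a b => a = none ∨ ∃ u v, a = some u ∧ b = some v ∧ G.Adj u v)

/-- Lexicographic product `G ∘ H`. -/
def lexProd {W : Type*} (G : SimpleGraph V) (H : SimpleGraph W) : SimpleGraph (V × W) :=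
  SimpleGraph.fromRel (fun a b => G.Adj a.1 b.1 ∨ (a.1 = b.1 ∧ H.Adj a.2 b.2))

/-- Corona `G ⊙ H`: vertex `(u, none)` is the vertex `u` of `G`, the vertices `(u, some w)`
form the copy of `H` joined to `u`. -/
def corona {W : Type*} (G : SimpleGraph V) (H : SimpleGraph W) : SimpleGraph (V × Option W) :=
  SimpleGraph.fromRel (fun a b =>
    (a.2 = none ∧ b.2 = none ∧ G.Adj a.1 b.1) ∨
    (a.1 = b.1 ∧ ∃ w w', a.2 = some w ∧ b.2 = some w' ∧ H.Adj w w') ∨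
    (a.1 = b.1 ∧ a.2 = none ∧ b.2 ≠ none))

/-- A digraph is acyclic if it has no directed cycle. -/
def DigraphAcyclic (D : V → V → Prop) : Prop :=
  ¬ ∃ (m : ℕ) (c : ℕ → V), 0 < m ∧ (∀ i < m, D (c i) (c (i + 1))) ∧ c m = c 0

/-- A packing of a digraph: no arc joins two of its vertices and no vertex has two
out-neighbors in it. -/
def IsPacking (D : V → V → Prop) (P : Finset V) : Prop :=
  (∀ u ∈ P, ∀ v ∈ P, ¬ D u v) ∧
  (∀ u ∈ P, ∀ v ∈ P, u ≠ v → ∀ w, ¬ (D w u ∧ D w v))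

/-- Packing number of a digraph. -/
noncomputable def packNum (D : V → V → Prop) : ℕ :=
  sSup {n | ∃ P : Finset V, P.card = n ∧ IsPacking D P}

/-!
For `DOM G ≤ α(G)`: split the vertices along a 2-colouring `A ⊔ Aᶜ`. Every orientation then
has a kernel, an independent set `X ∪ Y` dominating all other vertices, where `X ⊆ A` is a
fixed point of `X ↦ A \ N⁺(Aᶜ \ N⁺(X))` and `Y = Aᶜ \ N⁺(X)`. For `α(G) ≤ DOM G`: orient every
edge at a maximum independent set `S` away from `S`; the vertices of `S` are then sources, so
each dominating set contains `S`.
-/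

section Digraph

variable {V : Type*} (D : V → V → Prop)

def outNeighbors (X : Set V) : Set V := {v | ∃ u ∈ X, D u v}

theorem outNeighbors_mono : Monotone (outNeighbors D) :=
  fun _ _ hXY _ ⟨u, hu, huv⟩ => ⟨u, hXY hu, huv⟩

def IsKernel (K : Set V) : Prop :=
  (∀ u ∈ K, ∀ v ∈ K, ¬ D u v) ∧ ∀ v ∉ K, ∃ u ∈ K, D u v

variable {D}

theorem exists_isKernel_of_forall_mem_iff_notMem (A : Set V)
    (hA : ∀ ⦃u v⦄, D u v → (u ∈ A ↔ v ∉ A)) : ∃ K, IsKernel D K := by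
  let f : Set V →o Set V :=
    ⟨fun X => A \ outNeighbors D (Aᶜ \ outNeighbors D X), fun _ _ h =>
      Set.sdiff_subset_sdiff_right
        (outNeighbors_mono D (Set.sdiff_subset_sdiff_right (outNeighbors_mono D h)))⟩
  set X := OrderHom.lfp f
  set Y := Aᶜ \ outNeighbors D X
  have hX : X = A \ outNeighbors D Y := (OrderHom.map_lfp f).symm
  refine ⟨X ∪ Y, ?_, ?_⟩
  · have hXA : ∀ u ∈ X, u ∈ A := fun u hu => (hX ▸ hu).1
    have hYA : ∀ u ∈ Y, u ∉ A := fun u hu => hu.1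
    rintro u (hu | hu) v (hv | hv) huv
    · exact (hA huv).1 (hXA u hu) (hXA v hv)
    · exact hv.2 ⟨u, hu, huv⟩
    · exact (hX ▸ hv).2 ⟨u, hu, huv⟩
    · exact hYA u hu ((hA huv).2 (hYA v hv))
  · intro v hv
    rw [Set.mem_union, not_or] at hv
    by_cases hvA : v ∈ A
    · obtain ⟨u, hu, huv⟩ : v ∈ outNeighbors D Y := by
        by_contra h
        exact hv.1 (hX ▸ ⟨hvA, h⟩)
      exact ⟨u, Or.inr hu, huv⟩
    · obtain ⟨u, hu, huv⟩ : v ∈ outNeighbors D X := by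
        by_contra h
        exact hv.2 ⟨hvA, h⟩
      exact ⟨u, Or.inl hu, huv⟩

theorem domNum_le_card {S : Finset V} (hS : IsDomSet D S) : domNum D ≤ S.card :=
  Nat.sInf_le ⟨S, rfl, hS⟩

theorem IsDomSet.subset_of_forall_not {S T : Finset V} (hT : IsDomSet D T)
    (hS : ∀ v ∈ S, ∀ u, ¬ D u v) : S ⊆ T := by
  intro v hv
  by_contra hvT
  obtain ⟨u, -, huv⟩ := hT v hvT
  exact hS v hv u huv

theorem card_le_domNum_of_forall_not [Fintype V] {S : Finset V}
    (hS : ∀ v ∈ S, ∀ u, ¬ D u v) : S.card ≤ domNum D := by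
  obtain ⟨T, hT, hdom⟩ : domNum D ∈ {n | ∃ T : Finset V, T.card = n ∧ IsDomSet D T} :=
    Nat.sInf_mem ⟨_, Finset.univ, rfl, fun v hv => absurd (Finset.mem_univ v) hv⟩
  exact hT ▸ Finset.card_le_card (hdom.subset_of_forall_not hS)

end Digraph

section Graph

variable {V : Type*} {G : SimpleGraph V} {D : V → V → Prop}

theorem IsOrientation.adj_iff (hD : IsOrientation G D) {u v : V} :
    G.Adj u v ↔ D u v ∨ D v u := by
  refine ⟨fun h => ?_, fun h => h.elim (hD.1 u v) fun h => (hD.1 v u h).symm⟩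
  by_cases huv : D u v
  · exact Or.inl huv
  · exact Or.inr ((hD.2 v u h.symm).2 huv)

theorem IsOrientation.exists_isDomSet_of_colorable [Finite V] (hbip : G.Colorable 2)
    (hD : IsOrientation G D) :
    ∃ S : Finset V, IsDomSet D S ∧ ∀ u ∈ S, ∀ v ∈ S, ¬ G.Adj u v := by
  obtain ⟨A, B, hAB⟩ := SimpleGraph.IsBipartite.exists_isBipartiteWith hbip
  have hA : ∀ ⦃u v⦄, D u v → (u ∈ A ↔ v ∉ A) := fun u v huv => by
    rcases hAB.mem_of_adj (hD.1 u v huv) with ⟨hu, hv⟩ | ⟨hu, hv⟩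
    · exact iff_of_true hu (Set.disjoint_right.1 hAB.disjoint hv)
    · exact iff_of_false (Set.disjoint_right.1 hAB.disjoint hu) (not_not.2 hv)
  obtain ⟨K, hindep, hdom⟩ := exists_isKernel_of_forall_mem_iff_notMem A hA
  refine ⟨(Set.toFinite K).toFinset, fun v hv => ?_, fun u hu v hv huv => ?_⟩
  · simpa using hdom v (by simpa using hv)
  · rw [Set.Finite.mem_toFinset] at hu hv
    rcases hD.adj_iff.1 huv with h | h
    · exact hindep u hu v hv h
    · exact hindep v hv u hu h

theorem domNum_le_DOM [Fintype V] (hD : IsOrientation G D) : domNum D ≤ DOM G :=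
  le_csSup ⟨Fintype.card V, by
    rintro n ⟨D, -, rfl⟩
    exact (domNum_le_card (S := Finset.univ) fun v hv => absurd (Finset.mem_univ v) hv).trans
      Finset.card_univ.le⟩ ⟨D, hD, rfl⟩

theorem DOM_le {n : ℕ} (h : ∀ D, IsOrientation G D → domNum D ≤ n) : DOM G ≤ n :=
  csSup_le' (by rintro _ ⟨D, hD, rfl⟩; exact h D hD)

theorem indepNum_bddAbove [Fintype V] :
    BddAbove {n | ∃ S : Finset V, S.card = n ∧ ∀ u ∈ S, ∀ v ∈ S, ¬ G.Adj u v} :=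
  ⟨Fintype.card V, by rintro _ ⟨S, rfl, -⟩; exact Finset.card_le_univ S⟩

theorem card_le_indepNum [Fintype V] {S : Finset V} (hS : ∀ u ∈ S, ∀ v ∈ S, ¬ G.Adj u v) :
    S.card ≤ _root_.indepNum G :=
  le_csSup indepNum_bddAbove ⟨S, rfl, hS⟩

theorem exists_card_eq_indepNum [Fintype V] :
    ∃ S : Finset V, S.card = _root_.indepNum G ∧ ∀ u ∈ S, ∀ v ∈ S, ¬ G.Adj u v :=
  Nat.sSup_mem (s := {n | ∃ S : Finset V, S.card = n ∧ ∀ u ∈ S, ∀ v ∈ S, ¬ G.Adj u v})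
    ⟨0, ∅, rfl, by simp⟩ indepNum_bddAbove

end Graph

section OrientAway

variable {V : Type*} (G : SimpleGraph V) (S : Set V)

def orientAway : V → V → Prop :=
  fun u v => G.Adj u v ∧ (u ∈ S ∨ (v ∉ S ∧ WellOrderingRel u v))

theorem orientAway_isOrientation (hS : ∀ u ∈ S, ∀ v ∈ S, ¬ G.Adj u v) :
    IsOrientation G (orientAway G S) := by
  refine ⟨fun u v h => h.1, fun u v huv => ?_⟩
  have hne : u ≠ v := G.ne_of_adj huv
  by_cases hu : u ∈ S <;> by_cases hv : v ∈ S
  · exact absurd huv (hS u hu v hv)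
  all_goals
    simp only [orientAway, huv, huv.symm, hu, hv, true_and, false_or, true_or, not_true,
      false_and, not_false_eq_true, or_false]
  · exact ⟨fun h => asymm h, fun h => ((trichotomous_of WellOrderingRel u v).resolve_right
      (not_or.2 ⟨hne, h⟩))⟩

theorem orientAway_not_of_mem (hS : ∀ u ∈ S, ∀ v ∈ S, ¬ G.Adj u v) {u v : V} (hv : v ∈ S) :
    ¬ orientAway G S u v := fun ⟨huv, h⟩ =>
  h.elim (fun hu => hS u hu v hv huv) fun h => h.1 hv

end OrientAway

theorem indepNum_le_DOM {V : Type*} [Fintype V] (G : SimpleGraph V) :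
    _root_.indepNum G ≤ DOM G := by
  obtain ⟨S, hcard, hS⟩ := exists_card_eq_indepNum (G := G)
  have hS' : ∀ u ∈ (S : Set V), ∀ v ∈ (S : Set V), ¬ G.Adj u v := hS
  calc _root_.indepNum G = S.card := hcard.symm
    _ ≤ domNum (orientAway G S) :=
      card_le_domNum_of_forall_not fun v hv u => orientAway_not_of_mem G S hS' hv
    _ ≤ DOM G := domNum_le_DOM (orientAway_isOrientation G S hS')

theorem DOM_le_indepNum {V : Type*} [Fintype V] {G : SimpleGraph V} (hbip : G.Colorable 2) :
    DOM G ≤ _root_.indepNum G :=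
  DOM_le fun _ hD =>
    let ⟨_, hdom, hindep⟩ := hD.exists_isDomSet_of_colorable hbip
    (domNum_le_card hdom).trans (card_le_indepNum hindep)

theorem stmt5 {V : Type*} [Fintype V] (G : SimpleGraph V) (hbip : G.Colorable 2) :
    DOM G = _root_.indepNum G :=
  (DOM_le_indepNum hbip).antisymm (indepNum_le_DOM G)
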